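/- Second Changing Lemma: let M ∈ 𝒞̄_f, A ≤ M, and A' ∈ 𝒞̄_f with the same underlying set as A, and let M' be obtained from M by replacing A by A'. If PG(A) = PG(A') (i.e., d_A = d_{A'}), then PG(M) = PG(M') (i.e., d_M = d_{M'}). -/
import Mathlib


open Classical

/-- A relational structure for a language with relation symbols indexed by `I`,
where `R_i` has arity `ar i`, over a universe `U`.  The carrier may be infinite. -/
structure BigFS (I : Type) (ar : I → ℕ) (U : Type) where
  carrier : Set U
  rels : Set ((i : I) × (Fin (ar i) → U))
  mem_carrier : ∀ r ∈ rels, ∀ k, r.2 k ∈ carrier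

namespace BigFS

variable {I U : Type} {ar : I → ℕ}

/-- The relation instances of `M` all of whose entries lie in `S`
(the relations of the induced substructure on `S`). -/
def relsIn (M : BigFS I ar U) (S : Set U) : Set ((i : I) × (Fin (ar i) → U)) :=
  {r ∈ M.rels | ∀ k, r.2 k ∈ S}

/-- The predimension `δ(S) = |S| - Σ_i α_i |R_i^S|` of the induced substructure of `M`
on the finite set `S` (with weights `α`). -/
noncomputable def bdelta (α : I → ℕ) (M : BigFS I ar U) (S : Finset U) : ℤ :=
  (S.card : ℤ) - ∑ᶠ r ∈ M.relsIn ↑S, (α r.1 : ℤ)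

/-- `M ∈ 𝒞̄_f`: every finite substructure has finitely many relation instances and
nonnegative predimension. -/
def inCbar (α : I → ℕ) (M : BigFS I ar U) : Prop :=
  ∀ S : Finset U, ↑S ⊆ M.carrier → (M.relsIn ↑S).Finite ∧ 0 ≤ bdelta α M S

/-- The dimension `d_M(S) = min { δ(T) : S ⊆ T ⊆ M finite }`. -/
noncomputable def dim (α : I → ℕ) (M : BigFS I ar U) (S : Finset U) : ℤ :=
  sInf {z : ℤ | ∃ T : Finset U, S ⊆ T ∧ ↑T ⊆ M.carrier ∧ bdelta α M T = z}

/-- A finite subset `S` is self-sufficient in `M`: `δ(S) ≤ δ(T)` for all finite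
`S ⊆ T ⊆ M`. -/
def ssIn (α : I → ℕ) (M : BigFS I ar U) (S : Finset U) : Prop :=
  ↑S ⊆ M.carrier ∧ ∀ T : Finset U, S ⊆ T → ↑T ⊆ M.carrier → bdelta α M S ≤ bdelta α M T

/-- A (possibly infinite) subset `Z` is self-sufficient in `M`:
`δ(Z ∩ T) ≤ δ(T)` for every finite substructure `T` of `M`. -/
def ssSet (α : I → ℕ) (M : BigFS I ar U) (Z : Set U) : Prop :=
  Z ⊆ M.carrier ∧ ∀ T : Finset U, ↑T ⊆ M.carrier →
    bdelta α M (T.filter (fun x => x ∈ Z)) ≤ bdelta α M T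

/-- The induced substructure of `M` on the set `Z`. -/
def inducedBig (M : BigFS I ar U) (Z : Set U) : BigFS I ar U :=
  ⟨M.carrier ∩ Z, M.relsIn Z, fun r hr k => ⟨M.mem_carrier r hr.1 k, hr.2 k⟩⟩

/-- An embedding of `B` into `M` (as `L_f`-structures): injective on the carrier,
mapping into the carrier, preserving and reflecting all relations. -/
def IsEmb {V : Type} (B : BigFS I ar U) (M : BigFS I ar V) (g : U → V) : Prop :=
  Set.InjOn g B.carrier ∧ g '' B.carrier ⊆ M.carrier ∧
  ∀ r : (i : I) × (Fin (ar i) → U), (∀ k, r.2 k ∈ B.carrier) →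
    (r ∈ B.rels ↔ (⟨r.1, g ∘ r.2⟩ : (i : I) × (Fin (ar i) → V)) ∈ M.rels)

/-- `M` is a (countable) generic structure for `(𝒞_f, ≤)`: all finite substructures
lie in `𝒞_f` and `M` has the extension property: whenever `Z ≤ M`, `Z ≤ B ∈ 𝒞_f`
(with the same induced structure on `Z`), `B` embeds into `M` over `Z` with
self-sufficient image. -/
def IsGeneric (α : I → ℕ) (M : BigFS I ar U) : Prop :=
  M.carrier.Countable ∧ inCbar α M ∧
  ∀ B : BigFS I ar U, B.carrier.Finite → inCbar α B →
  ∀ Z : Set U, Z ⊆ B.carrier → ssSet α B Z → ssSet α M Z →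
    inducedBig B Z = inducedBig M Z →
    ∃ g : U → U, IsEmb B M g ∧ (∀ a ∈ Z, g a = a) ∧ ssSet α M (g '' B.carrier)

/-- The `d`-closure of a finite set `A` in `M`:
`{c ∈ M : d(A ∪ {c}) = d(A)}`. -/
noncomputable def cld (α : I → ℕ) (M : BigFS I ar U) (A : Finset U) : Set U :=
  {c | c ∈ M.carrier ∧ dim α M (insert c A) = dim α M A}

end BigFS

open BigFS

section AuxSecondChanging

open BigFS

variable {I U : Type} {ar : I → ℕ}

/-- Total weight of a set of relation instances. -/
noncomputable def wgtSC (α : I → ℕ) (R : Set ((i : I) × (Fin (ar i) → U))) : ℤ :=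
  ∑ᶠ r ∈ R, (α r.1 : ℤ)

lemma bdelta_eq_wgtSC (α : I → ℕ) (M : BigFS I ar U) (S : Finset U) :
    bdelta α M S = (S.card : ℤ) - wgtSC α (M.relsIn ↑S) := rfl

lemma wgtSC_nonneg {α : I → ℕ} {R : Set ((i : I) × (Fin (ar i) → U))} (hR : R.Finite) :
    0 ≤ wgtSC α R := by
  rw [wgtSC, finsum_mem_eq_finite_toFinset_sum _ hR]
  exact Finset.sum_nonneg fun r _ => by positivity

lemma wgtSC_mono {α : I → ℕ} {R S : Set ((i : I) × (Fin (ar i) → U))}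
    (hS : S.Finite) (h : R ⊆ S) : wgtSC α R ≤ wgtSC α S := by
  rw [wgtSC, wgtSC, finsum_mem_eq_finite_toFinset_sum _ hS,
    finsum_mem_eq_finite_toFinset_sum _ (hS.subset h)]
  refine Finset.sum_le_sum_of_subset_of_nonneg ?_ ?_
  · intro x hx
    simp only [Set.Finite.mem_toFinset] at hx ⊢
    exact h hx
  · intro r _ _; positivity

lemma wgtSC_union {α : I → ℕ} {R S : Set ((i : I) × (Fin (ar i) → U))}
    (h : Disjoint R S) (hR : R.Finite) (hS : S.Finite) :
    wgtSC α (R ∪ S) = wgtSC α R + wgtSC α S :=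
  finsum_mem_union h hR hS

lemma wgtSC_union_inter (α : I → ℕ) {R S : Set ((i : I) × (Fin (ar i) → U))}
    (hR : R.Finite) (hS : S.Finite) :
    wgtSC α (R ∪ S) + wgtSC α (R ∩ S) = wgtSC α R + wgtSC α S :=
  finsum_mem_union_inter hR hS

lemma wgtSC_split (α : I → ℕ) {R : Set ((i : I) × (Fin (ar i) → U))} (hR : R.Finite)
    (Y : Set ((i : I) × (Fin (ar i) → U))) :
    wgtSC α R = wgtSC α (R \ Y) + wgtSC α (R ∩ Y) := by
  rw [← wgtSC_union (Set.disjoint_left.mpr fun x hx hx2 => hx.2 hx2.2)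
    (hR.subset Set.diff_subset) (hR.subset Set.inter_subset_left), Set.diff_union_inter]

lemma relsIn_monoSC (M : BigFS I ar U) {S T : Set U} (h : S ⊆ T) :
    M.relsIn S ⊆ M.relsIn T :=
  fun r hr => ⟨hr.1, fun k => h (hr.2 k)⟩

lemma relsIn_interSC (M : BigFS I ar U) (S T : Set U) :
    M.relsIn (S ∩ T) = M.relsIn S ∩ M.relsIn T := by
  ext r
  constructor
  · exact fun hr => ⟨⟨hr.1, fun k => (hr.2 k).1⟩, ⟨hr.1, fun k => (hr.2 k).2⟩⟩
  · exact fun h => ⟨h.1.1, fun k => ⟨h.1.2 k, h.2.2 k⟩⟩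

/-- Submodularity of the predimension. -/
lemma bdelta_submodSC (α : I → ℕ) (N : BigFS I ar U) (X Y : Finset U)
    (h : (N.relsIn ↑(X ∪ Y)).Finite) :
    bdelta α N (X ∪ Y) + bdelta α N (X ∩ Y) ≤ bdelta α N X + bdelta α N Y := by
  have hXsub : N.relsIn ↑X ⊆ N.relsIn ↑(X ∪ Y) :=
    relsIn_monoSC N (by rw [Finset.coe_union]; exact Set.subset_union_left)
  have hYsub : N.relsIn ↑Y ⊆ N.relsIn ↑(X ∪ Y) :=
    relsIn_monoSC N (by rw [Finset.coe_union]; exact Set.subset_union_right)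
  have hX : (N.relsIn ↑X).Finite := h.subset hXsub
  have hY : (N.relsIn ↑Y).Finite := h.subset hYsub
  have h2 : N.relsIn ↑X ∩ N.relsIn ↑Y = N.relsIn ↑(X ∩ Y) := by
    rw [← relsIn_interSC, Finset.coe_inter]
  have h1 : wgtSC α (N.relsIn ↑X ∪ N.relsIn ↑Y) + wgtSC α (N.relsIn ↑(X ∩ Y))
      = wgtSC α (N.relsIn ↑X) + wgtSC α (N.relsIn ↑Y) := by
    rw [← h2]; exact wgtSC_union_inter α hX hY
  have h3 : wgtSC α (N.relsIn ↑X ∪ N.relsIn ↑Y) ≤ wgtSC α (N.relsIn ↑(X ∪ Y)) :=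
    wgtSC_mono h (Set.union_subset hXsub hYsub)
  have hcard : ((X ∪ Y).card : ℤ) + ((X ∩ Y).card : ℤ) = (X.card : ℤ) + (Y.card : ℤ) := by
    exact_mod_cast congrArg (Nat.cast : ℕ → ℤ) (Finset.card_union_add_card_inter X Y)
  simp only [bdelta_eq_wgtSC]
  linarith

/-- Decomposition of the relations of `M'` inside a finite set. -/
lemma rels_decompSC (M A' M' : BigFS I ar U) (Z : Set U) (hA'c : A'.carrier = Z)
    (hr : M'.rels = (M.rels \ M.relsIn Z) ∪ A'.rels) (T : Finset U) :
    M'.relsIn ↑T = (M.relsIn ↑T \ M.relsIn Z) ∪ A'.relsIn ↑(T.filter (fun x => x ∈ Z)) := by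
  have hmem : ∀ r ∈ A'.rels, ∀ k, (r : (i : I) × (Fin (ar i) → U)).2 k ∈ Z :=
    fun r hr' k => hA'c ▸ A'.mem_carrier r hr' k
  ext r
  constructor
  · rintro ⟨hr1, hr2⟩
    rw [hr] at hr1
    rcases hr1 with ⟨h1, h2⟩ | h1
    · exact Or.inl ⟨⟨h1, hr2⟩, h2⟩
    · refine Or.inr ⟨h1, fun k => ?_⟩
      simp only [Finset.coe_filter, Set.mem_setOf_eq]
      exact ⟨Finset.mem_coe.mp (hr2 k), hmem r h1 k⟩
  · rintro (⟨⟨h1, h2⟩, h3⟩ | ⟨h1, h2⟩)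
    · exact ⟨hr ▸ Set.mem_union_left _ ⟨h1, h3⟩, h2⟩
    · refine ⟨hr ▸ Set.mem_union_right _ h1, fun k => ?_⟩
      have := h2 k
      simp only [Finset.coe_filter, Set.mem_setOf_eq] at this
      exact Finset.mem_coe.mpr this.1

lemma relsIn'_finiteSC (α : I → ℕ) (M A' M' : BigFS I ar U) (Z : Set U)
    (hM : inCbar α M) (hA' : inCbar α A') (hA'c : A'.carrier = Z)
    (hr : M'.rels = (M.rels \ M.relsIn Z) ∪ A'.rels)
    (T : Finset U) (hT : ↑T ⊆ M.carrier) : (M'.relsIn ↑T).Finite := by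
  rw [rels_decompSC M A' M' Z hA'c hr T]
  have hT₀Z : ↑(T.filter (fun x => x ∈ Z)) ⊆ A'.carrier := by
    rw [hA'c]; intro x hx
    exact (Finset.mem_filter.mp (Finset.mem_coe.mp hx)).2
  exact (((hM T hT).1).subset Set.diff_subset).union (hA' _ hT₀Z).1

/-- The key identity `δ_{M'}(T) = δ_M(T) - δ_M(T∩Z) + δ_{A'}(T∩Z)`. -/
lemma bdelta_M'SC (α : I → ℕ) (M A' M' : BigFS I ar U) (Z : Set U)
    (hM : inCbar α M) (hA' : inCbar α A') (hA'c : A'.carrier = Z)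
    (hr : M'.rels = (M.rels \ M.relsIn Z) ∪ A'.rels)
    (T : Finset U) (hT : ↑T ⊆ M.carrier) :
    bdelta α M' T = bdelta α M T - bdelta α M (T.filter (fun x => x ∈ Z))
      + bdelta α A' (T.filter (fun x => x ∈ Z)) := by
  set T₀ : Finset U := T.filter (fun x => x ∈ Z) with hT₀def
  have hT₀T : T₀ ⊆ T := Finset.filter_subset _ _
  have hT₀Z : (↑T₀ : Set U) ⊆ Z := fun x hx => (Finset.mem_filter.mp (Finset.mem_coe.mp hx)).2
  have hfM : (M.relsIn ↑T).Finite := (hM T hT).1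
  have hfM₀ : (M.relsIn ↑T₀).Finite :=
    hfM.subset (relsIn_monoSC M (Finset.coe_subset.mpr hT₀T))
  have hfA : (A'.relsIn ↑T₀).Finite := (hA' T₀ (hA'c ▸ hT₀Z)).1
  have hcoe : (↑T : Set U) ∩ Z = ↑T₀ := by
    ext x
    simp only [Set.mem_inter_iff, Finset.coe_filter, Set.mem_setOf_eq, Finset.mem_coe, hT₀def]
  have hint : M.relsIn ↑T ∩ M.relsIn Z = M.relsIn ↑T₀ := by
    rw [← relsIn_interSC, hcoe]
  have hdisj : Disjoint (M.relsIn ↑T \ M.relsIn Z) (A'.relsIn ↑T₀) := by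
    rw [Set.disjoint_left]
    rintro r ⟨hr1, hr2⟩ hr3
    exact hr2 ⟨hr1.1, fun k => hT₀Z (hr3.2 k)⟩
  have hw : wgtSC α (M'.relsIn ↑T)
      = wgtSC α (M.relsIn ↑T) - wgtSC α (M.relsIn ↑T₀) + wgtSC α (A'.relsIn ↑T₀) := by
    rw [rels_decompSC M A' M' Z hA'c hr T, ← hT₀def,
      wgtSC_union hdisj (hfM.subset Set.diff_subset) hfA]
    have hsplit := wgtSC_split α hfM (M.relsIn Z)
    rw [hint] at hsplit
    linarith
  simp only [bdelta_eq_wgtSC]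
  rw [hw]
  ring

lemma bdelta_inducedSC (α : I → ℕ) (M : BigFS I ar U) (Z : Set U) {W : Finset U}
    (hW : (↑W : Set U) ⊆ Z) :
    bdelta α (M.inducedBig Z) W = bdelta α M W := by
  have : (M.inducedBig Z).relsIn ↑W = M.relsIn ↑W := by
    ext r
    constructor
    · exact fun h => ⟨h.1.1, h.2⟩
    · exact fun h => ⟨⟨h.1, fun k => hW (h.2 k)⟩, h.2⟩
  simp only [bdelta_eq_wgtSC, this]

lemma dim_leSC (α : I → ℕ) (N : BigFS I ar U)
    (hlb : ∀ T : Finset U, ↑T ⊆ N.carrier → 0 ≤ bdelta α N T)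
    {S T : Finset U} (hST : S ⊆ T) (hT : ↑T ⊆ N.carrier) :
    dim α N S ≤ bdelta α N T := by
  refine csInf_le ⟨0, ?_⟩ ⟨T, hST, hT, rfl⟩
  rintro z ⟨T', _, hT', rfl⟩
  exact hlb T' hT'

lemma le_dimSC (α : I → ℕ) (N : BigFS I ar U) {S : Finset U} (hS : ↑S ⊆ N.carrier) {a : ℤ}
    (h : ∀ T : Finset U, S ⊆ T → ↑T ⊆ N.carrier → a ≤ bdelta α N T) :
    a ≤ dim α N S := by
  refine le_csInf ⟨bdelta α N S, S, subset_rfl, hS, rfl⟩ ?_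
  rintro z ⟨T, h1, h2, rfl⟩
  exact h T h1 h2

lemma dim_attainedSC (α : I → ℕ) (N : BigFS I ar U)
    (hlb : ∀ T : Finset U, ↑T ⊆ N.carrier → 0 ≤ bdelta α N T)
    {S : Finset U} (hS : ↑S ⊆ N.carrier) :
    ∃ T : Finset U, S ⊆ T ∧ ↑T ⊆ N.carrier ∧ bdelta α N T = dim α N S := by
  have hmem := Int.csInf_mem
    (s := {z : ℤ | ∃ T : Finset U, S ⊆ T ∧ ↑T ⊆ N.carrier ∧ bdelta α N T = z})
    ⟨bdelta α N S, S, subset_rfl, hS, rfl⟩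
    ⟨0, by rintro z ⟨T', _, hT', rfl⟩; exact hlb T' hT'⟩
  exact hmem

end AuxSecondChanging

/-- Second Changing Lemma: if `M ∈ 𝒞̄_f`, `A ≤ M` (underlying set `Z`),
`A' ∈ 𝒞̄_f` has the same underlying set, `M'` is obtained by replacing the structure
on `Z` by `A'`, and `PG(A) = PG(A')` (`d_A = d_{A'}`), then `PG(M) = PG(M')`
(`d_M = d_{M'}`). -/
theorem second_changing_lemma {I U : Type} {ar : I → ℕ} (α : I → ℕ)
    (hα : ∀ i, 0 < α i) (M : BigFS I ar U) (hM : inCbar α M)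
    (Z : Set U) (hZ : ssSet α M Z)
    (A' : BigFS I ar U) (hA'c : A'.carrier = Z) (hA' : inCbar α A')
    (hd : ∀ S : Finset U, dim α (M.inducedBig Z) S = dim α A' S)
    (M' : BigFS I ar U) (hc : M'.carrier = M.carrier)
    (hr : M'.rels = (M.rels \ M.relsIn Z) ∪ A'.rels) :
    ∀ S : Finset U, dim α M S = dim α M' S := by
  intro S
  have hZc : Z ⊆ M.carrier := hZ.1
  by_cases hS : (↑S : Set U) ⊆ M.carrier
  swap
  · -- both candidate sets are empty
    have he : ∀ N : BigFS I ar U, N.carrier = M.carrier →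
        {z : ℤ | ∃ T : Finset U, S ⊆ T ∧ ↑T ⊆ N.carrier ∧ bdelta α N T = z} = ∅ := by
      intro N hN
      ext z
      simp only [Set.mem_setOf_eq, Set.mem_empty_iff_false, iff_false]
      rintro ⟨T, h1, h2, _⟩
      refine hS fun x hx => ?_
      have : x ∈ (↑T : Set U) := Finset.mem_coe.mpr (h1 (Finset.mem_coe.mp hx))
      exact hN ▸ h2 this
    rw [dim, dim, he M rfl, he M' hc]
  -- main case
  -- lower bound facts
  have hlbM : ∀ T : Finset U, ↑T ⊆ M.carrier → 0 ≤ bdelta α M T := fun T hT => (hM T hT).2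
  have hlbA' : ∀ T : Finset U, ↑T ⊆ A'.carrier → 0 ≤ bdelta α A' T := fun T hT => (hA' T hT).2
  have hlbInd : ∀ T : Finset U, ↑T ⊆ (M.inducedBig Z).carrier → 0 ≤ bdelta α (M.inducedBig Z) T := by
    intro T hT
    have hTZ : (↑T : Set U) ⊆ Z := fun x hx => (hT hx).2
    rw [bdelta_inducedSC α M Z hTZ]
    exact hlbM T fun x hx => (hT hx).1
  -- the key identity, abbreviated
  have hid : ∀ T : Finset U, ↑T ⊆ M.carrier →
      bdelta α M' T = bdelta α M T - bdelta α M (T.filter (fun x => x ∈ Z))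
        + bdelta α A' (T.filter (fun x => x ∈ Z)) :=
    fun T hT => bdelta_M'SC α M A' M' Z hM hA' hA'c hr T hT
  -- δ_{M'} agrees with δ_{A'} on subsets of Z
  have hidZ : ∀ W : Finset U, (↑W : Set U) ⊆ Z → bdelta α M' W = bdelta α A' W := by
    intro W hW
    have hWf : W.filter (fun x => x ∈ Z) = W :=
      Finset.filter_true_of_mem fun x hx => hW (Finset.mem_coe.mpr hx)
    have := hid W (hW.trans hZc)
    rw [hWf] at this
    linarith
  -- key construction (a): from a candidate for M to a candidate for M'
  have keyA : ∀ T : Finset U, S ⊆ T → ↑T ⊆ M.carrier →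
      ∃ T' : Finset U, S ⊆ T' ∧ ↑T' ⊆ M.carrier ∧ bdelta α M' T' ≤ bdelta α M T := by
    intro T hST hT
    set T₀ : Finset U := T.filter (fun x => x ∈ Z) with hT₀def
    have hT₀T : T₀ ⊆ T := Finset.filter_subset _ _
    have hT₀Z : (↑T₀ : Set U) ⊆ Z := fun x hx => (Finset.mem_filter.mp (Finset.mem_coe.mp hx)).2
    have hT₀M : (↑T₀ : Set U) ⊆ M.carrier := (Finset.coe_subset.mpr hT₀T).trans hT
    have hT₀A' : (↑T₀ : Set U) ⊆ A'.carrier := by rw [hA'c]; exact hT₀Z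
    obtain ⟨W, hT₀W, hWc, hWd⟩ := dim_attainedSC α A' hlbA' hT₀A'
    have hWZ : (↑W : Set U) ⊆ Z := by rw [← hA'c]; exact hWc
    have hWM : (↑W : Set U) ⊆ M.carrier := hWZ.trans hZc
    -- δ_{A'}(W) = d_{A'}(T₀) = d_A(T₀) ≤ δ_M(T₀)
    have hT₀ind : (↑T₀ : Set U) ⊆ (M.inducedBig Z).carrier := fun x hx => ⟨hT₀M hx, hT₀Z hx⟩
    have hdle : dim α (M.inducedBig Z) T₀ ≤ bdelta α M T₀ := by
      have := dim_leSC α (M.inducedBig Z) hlbInd (subset_refl T₀) hT₀ind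
      rwa [bdelta_inducedSC α M Z hT₀Z] at this
    have hWle : bdelta α A' W ≤ bdelta α M T₀ := by rw [hWd, ← hd T₀]; exact hdle
    refine ⟨T ∪ W, hST.trans Finset.subset_union_left, ?_, ?_⟩
    · rw [Finset.coe_union]; exact Set.union_subset hT hWM
    · have hfilter : (T ∪ W).filter (fun x => x ∈ Z) = W := by
        ext x
        simp only [Finset.mem_filter, Finset.mem_union]
        constructor
        · rintro ⟨hx1 | hx1, hx2⟩
          · exact hT₀W (Finset.mem_filter.mpr ⟨hx1, hx2⟩)
          · exact hx1
        · intro hx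
          exact ⟨Or.inr hx, hWZ (Finset.mem_coe.mpr hx)⟩
      have hinter : T ∩ W = T₀ := by
        ext x
        simp only [Finset.mem_inter]
        constructor
        · rintro ⟨hx1, hx2⟩
          exact Finset.mem_filter.mpr ⟨hx1, hWZ (Finset.mem_coe.mpr hx2)⟩
        · intro hx
          exact ⟨hT₀T hx, hT₀W hx⟩
      have hcup : (↑(T ∪ W) : Set U) ⊆ M.carrier := by
        rw [Finset.coe_union]; exact Set.union_subset hT hWM
      have hsub := bdelta_submodSC α M T W (hM _ hcup).1
      rw [hinter] at hsub
      have hident := hid (T ∪ W) hcup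
      rw [hfilter] at hident
      linarith
  -- key construction (b): from a candidate for M' to a candidate for M
  have keyB : ∀ T : Finset U, S ⊆ T → ↑T ⊆ M.carrier →
      ∃ T' : Finset U, S ⊆ T' ∧ ↑T' ⊆ M.carrier ∧ bdelta α M T' ≤ bdelta α M' T := by
    intro T hST hT
    set T₀ : Finset U := T.filter (fun x => x ∈ Z) with hT₀def
    have hT₀T : T₀ ⊆ T := Finset.filter_subset _ _
    have hT₀Z : (↑T₀ : Set U) ⊆ Z := fun x hx => (Finset.mem_filter.mp (Finset.mem_coe.mp hx)).2
    have hT₀M : (↑T₀ : Set U) ⊆ M.carrier := (Finset.coe_subset.mpr hT₀T).trans hT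
    have hT₀A' : (↑T₀ : Set U) ⊆ A'.carrier := by rw [hA'c]; exact hT₀Z
    have hT₀ind : (↑T₀ : Set U) ⊆ (M.inducedBig Z).carrier := fun x hx => ⟨hT₀M hx, hT₀Z hx⟩
    obtain ⟨W, hT₀W, hWc, hWd⟩ := dim_attainedSC α (M.inducedBig Z) hlbInd hT₀ind
    have hWZ : (↑W : Set U) ⊆ Z := fun x hx => (hWc hx).2
    have hWM : (↑W : Set U) ⊆ M.carrier := fun x hx => (hWc hx).1
    have hWind : bdelta α (M.inducedBig Z) W = bdelta α M W := bdelta_inducedSC α M Z hWZ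
    -- δ_M(W) = d_A(T₀) = d_{A'}(T₀) ≤ δ_{A'}(T₀)
    have hWle : bdelta α M W ≤ bdelta α A' T₀ := by
      rw [← hWind, hWd, hd T₀]
      exact dim_leSC α A' hlbA' (subset_refl T₀) hT₀A'
    refine ⟨T ∪ W, hST.trans Finset.subset_union_left, ?_, ?_⟩
    · rw [Finset.coe_union]; exact Set.union_subset hT hWM
    · have hinter : T ∩ W = T₀ := by
        ext x
        simp only [Finset.mem_inter]
        constructor
        · rintro ⟨hx1, hx2⟩
          exact Finset.mem_filter.mpr ⟨hx1, hWZ (Finset.mem_coe.mpr hx2)⟩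
        · intro hx
          exact ⟨hT₀T hx, hT₀W hx⟩
      have hfilter : (T ∪ W).filter (fun x => x ∈ Z) = W := by
        ext x
        simp only [Finset.mem_filter, Finset.mem_union]
        constructor
        · rintro ⟨hx1 | hx1, hx2⟩
          · exact hT₀W (Finset.mem_filter.mpr ⟨hx1, hx2⟩)
          · exact hx1
        · intro hx
          exact ⟨Or.inr hx, hWZ (Finset.mem_coe.mpr hx)⟩
      have hcup : (↑(T ∪ W) : Set U) ⊆ M.carrier := by
        rw [Finset.coe_union]; exact Set.union_subset hT hWM
      -- submodularity for M'
      have hfin' : (M'.relsIn ↑(T ∪ W)).Finite :=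
        relsIn'_finiteSC α M A' M' Z hM hA' hA'c hr (T ∪ W) hcup
      have hsub := bdelta_submodSC α M' T W hfin'
      rw [hinter] at hsub
      have hident := hid (T ∪ W) hcup
      rw [hfilter] at hident
      have hW' : bdelta α M' W = bdelta α A' W := hidZ W hWZ
      have hT₀' : bdelta α M' T₀ = bdelta α A' T₀ := hidZ T₀ hT₀Z
      linarith
  -- assemble
  have hS' : (↑S : Set U) ⊆ M'.carrier := by rw [hc]; exact hS
  apply le_antisymm
  · -- dim M S ≤ dim M' S
    refine le_csInf ⟨bdelta α M' S, S, subset_rfl, hS', rfl⟩ ?_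
    rintro z ⟨T, h1, h2, rfl⟩
    rw [hc] at h2
    obtain ⟨T', h1', h2', hle⟩ := keyB T h1 h2
    exact le_trans (dim_leSC α M hlbM h1' h2') hle
  · -- dim M' S ≤ dim M S
    obtain ⟨T, h1, h2, h3⟩ := dim_attainedSC α M hlbM hS
    obtain ⟨T', h1', h2', hle⟩ := keyA T h1 h2
    have hmem : bdelta α M' T' ∈
        {z : ℤ | ∃ T2 : Finset U, S ⊆ T2 ∧ ↑T2 ⊆ M'.carrier ∧ bdelta α M' T2 = z} :=
      ⟨T', h1', by rw [hc]; exact h2', rfl⟩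
    have hbdd : BddBelow
        {z : ℤ | ∃ T2 : Finset U, S ⊆ T2 ∧ ↑T2 ⊆ M'.carrier ∧ bdelta α M' T2 = z} := by
      refine ⟨0, ?_⟩
      rintro z ⟨T2, hT2a, hT2b, rfl⟩
      rw [hc] at hT2b
      obtain ⟨T3, _, hT3c, hle3⟩ := keyB T2 hT2a hT2b
      exact le_trans (hlbM T3 hT3c) hle3
    have : dim α M' S ≤ bdelta α M' T' := csInf_le hbdd hmem
    omega
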